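/- arXiv:0812.3499 — 9 statements merged into one kernel-verified Lean document; each statement's English description precedes it below -/
import Mathlib

section
/- Let L be a complete lattice. The map sending a closure operator f on L to the partial identity relation on its image, 1_{Im f} = {(ℓ,ℓ) : ℓf = ℓ}, is an order-embedding of the lattice of closure operators on L into the monoid of meet-closed binary relations on L, sending the identity closure operator to the diagonal relation, and satisfying 1_{Im f} ∘ 1_{Im g} = 1_{Im (f ∨ g)}. In particular the image of this map is an idempotent commutative submonoid. -/
/-- Closure operators on a complete lattice, ordered pointwise. -/
noncomputable instance closureOperatorOrder (α : Type*) [CompleteLattice α] :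
    PartialOrder (ClosureOperator α) :=
  PartialOrder.lift (fun c => (c : α → α)) DFunLike.coe_injective

/-- Relational composition of binary relations on `α`. -/
def relComp {α : Type*} (f g : Set (α × α)) : Set (α × α) :=
  {p | ∃ z, (p.1, z) ∈ f ∧ (z, p.2) ∈ g}

/-- The diagonal relation on `α`. -/
def relDiag (α : Type*) : Set (α × α) := {p | p.1 = p.2}

/-- The partial identity relation on the image (= set of fixed points) of a
closure operator `f` on `α`:  `1_{Im f} = {(ℓ, ℓ) : ℓ f = ℓ}`. -/
def partialId {α : Type*} [CompleteLattice α] (f : ClosureOperator α) : Set (α × α) :=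
  {p | p.1 = p.2 ∧ f p.1 = p.1}

/-!
Pointwise, `f ≤ g` holds exactly when every `g`-closed element is `f`-closed, so `f ↦ 1_{Im f}`
reverses inclusion faithfully. Sub-relations of the diagonal compose by intersection, and the
join `f ∨ g` is the closure operator whose closed elements are those closed for both `f` and `g`
(a family stable under arbitrary meets); hence `1_{Im f} ∘ 1_{Im g} = 1_{Im f} ∩ 1_{Im g}
= 1_{Im (f ∨ g)}`, which is idempotent and commutative.
-/

namespace ClosureOperator

variable {α : Type*} [CompleteLattice α]

theorem le_iff_isClosed_imp {f g : ClosureOperator α} :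
    f ≤ g ↔ ∀ x, g.IsClosed x → f.IsClosed x :=
  ⟨fun hfg x hx => f.isClosed_iff_closure_le.2 ((hfg x).trans_eq hx.closure_eq),
    fun h x => closure_min (g.le_closure x) (h _ (g.isClosed_closure x))⟩

def join (f g : ClosureOperator α) : ClosureOperator α :=
  ofCompletePred (fun x => f.IsClosed x ∧ g.IsClosed x) fun _ hs =>
    ⟨sInf_isClosed fun x hx => (hs x hx).1, sInf_isClosed fun x hx => (hs x hx).2⟩

theorem isClosed_join_iff {f g : ClosureOperator α} {x : α} :
    (join f g).IsClosed x ↔ f.IsClosed x ∧ g.IsClosed x :=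
  Iff.rfl

theorem isLUB_join (f g : ClosureOperator α) : IsLUB {f, g} (join f g) := by
  refine ⟨?_, fun k hk => le_iff_isClosed_imp.2 fun x hx => isClosed_join_iff.2 ⟨?_, ?_⟩⟩
  · rintro k (rfl | rfl)
    · exact le_iff_isClosed_imp.2 fun x hx => (isClosed_join_iff.1 hx).1
    · exact le_iff_isClosed_imp.2 fun x hx => (isClosed_join_iff.1 hx).2
  · exact le_iff_isClosed_imp.1 (hk (Set.mem_insert f {g})) x hx
  · exact le_iff_isClosed_imp.1 (hk (Set.mem_insert_of_mem f rfl)) x hx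

end ClosureOperator

theorem relComp_eq_inter_of_subset_relDiag {α : Type*} {R S : Set (α × α)}
    (hR : R ⊆ relDiag α) (hS : S ⊆ relDiag α) : relComp R S = R ∩ S := by
  ext ⟨x, y⟩
  constructor
  · rintro ⟨z, hxz, hzy⟩
    obtain rfl : x = z := hR hxz
    obtain rfl : x = y := hS hzy
    exact ⟨hxz, hzy⟩
  · rintro ⟨hxy, hxy'⟩
    obtain rfl : x = y := hR hxy
    exact ⟨x, hxy, hxy'⟩

section partialId

open ClosureOperator

variable {α : Type*} [CompleteLattice α]

theorem mem_partialId_iff {f : ClosureOperator α} {x y : α} :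
    (x, y) ∈ partialId f ↔ x = y ∧ f.IsClosed x := by
  rw [f.isClosed_iff]
  rfl

theorem partialId_subset_relDiag (f : ClosureOperator α) : partialId f ⊆ relDiag α :=
  fun _ hp => hp.1

theorem partialId_subset_partialId_iff {f g : ClosureOperator α} :
    partialId g ⊆ partialId f ↔ ∀ x, g.IsClosed x → f.IsClosed x := by
  refine ⟨fun h x hx => (mem_partialId_iff.1 (h (mem_partialId_iff.2 ⟨rfl, hx⟩))).2, ?_⟩
  rintro h ⟨x, y⟩ hxy
  obtain ⟨rfl, hx⟩ := mem_partialId_iff.1 hxy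
  exact mem_partialId_iff.2 ⟨rfl, h x hx⟩

theorem partialId_id : partialId (ClosureOperator.id α) = relDiag α := by
  ext ⟨x, y⟩
  exact and_iff_left rfl

theorem partialId_join (f g : ClosureOperator α) :
    partialId (join f g) = partialId f ∩ partialId g := by
  ext ⟨x, y⟩
  simp only [Set.mem_inter_iff, mem_partialId_iff, isClosed_join_iff]
  tauto

theorem relComp_partialId (f g : ClosureOperator α) :
    relComp (partialId f) (partialId g) = partialId f ∩ partialId g :=
  relComp_eq_inter_of_subset_relDiag (partialId_subset_relDiag f) (partialId_subset_relDiag g)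

end partialId

/-- The map `f ↦ 1_{Im f}` is an order-embedding of the lattice of closure
operators on `L` into the monoid of meet-closed binary relations on `L`
(ordered by reverse inclusion), sending the identity closure operator to
the diagonal relation and satisfying `1_{Im f} ∘ 1_{Im g} = 1_{Im (f ∨ g)}`;
in particular its image is an idempotent, commutative submonoid. -/
theorem partialId_embedding (α : Type*) [CompleteLattice α] :
    (∀ f g : ClosureOperator α, f ≤ g ↔ partialId g ⊆ partialId f) ∧
    (partialId (ClosureOperator.id α) = relDiag α) ∧
    (∀ f g h : ClosureOperator α, IsLUB {f, g} h →
      relComp (partialId f) (partialId g) = partialId h) ∧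
    (∀ f : ClosureOperator α, relComp (partialId f) (partialId f) = partialId f) ∧
    (∀ f g : ClosureOperator α,
      relComp (partialId f) (partialId g) = relComp (partialId g) (partialId f)) := by
  refine ⟨fun f g => ?_, partialId_id, fun f g h hh => ?_, fun f => ?_, fun f g => ?_⟩
  · rw [ClosureOperator.le_iff_isClosed_imp, partialId_subset_partialId_iff]
  · rw [relComp_partialId, hh.unique (ClosureOperator.isLUB_join f g), partialId_join]
  · rw [relComp_partialId, Set.inter_self]
  · rw [relComp_partialId, relComp_partialId, Set.inter_comm]
end

section
/- Let f be a closure operator on L² with associated meet-closed relation f̄, and let the back-flow operator ←f be the closure operator on L whose image is dom f̄. Then for all ℓ ∈ L, ℓ(←f) equals the first coordinate of the value of f applied to the pair (ℓ, B), where B is the bottom of L. -/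
namespace ClosureOperator

variable {α β : Type*} [Preorder α] [Preorder β] [OrderBot β]

theorem isLeast_fst_closure_bot (f : ClosureOperator (α × β)) (ℓ : α) :
    IsLeast {k : α | (∃ y, f (k, y) = (k, y)) ∧ ℓ ≤ k} (f (ℓ, ⊥)).1 := by
  refine ⟨⟨⟨(f (ℓ, ⊥)).2, f.idempotent (ℓ, ⊥)⟩, (f.le_closure (ℓ, ⊥)).1⟩, ?_⟩
  rintro k ⟨⟨y, hy⟩, hℓk⟩
  have hle : f (ℓ, ⊥) ≤ f (k, y) := f.monotone ⟨hℓk, bot_le⟩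
  rw [hy] at hle
  exact hle.1

end ClosureOperator

/-- Let `f` be a closure operator on `L²` with associated meet-closed relation `f̄`
(its set of fixed points), and let the back-flow operator `←f` be the closure
operator on `L` whose image is `dom f̄`, that is,
`ℓ(←f) = ⨅ {k ∈ dom f̄ : ℓ ≤ k}`.  Then for all `ℓ ∈ L`, `ℓ(←f)` equals the first
coordinate of `f (ℓ, B)`, where `B` is the bottom of `L`. -/
theorem backflow_formula (α : Type*) [CompleteLattice α]
    (f : ClosureOperator (α × α)) (ℓ : α) :
    sInf {k : α | (∃ y, f (k, y) = (k, y)) ∧ ℓ ≤ k} = (f (ℓ, ⊥)).1 :=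
  (f.isLeast_fst_closure_bot ℓ).isGLB.sInf_eq
end

section
/- Let f, g be closure operators on L² and ℓ ∈ L. If ℓ(←f) = ℓ and (ℓ(→f))(←g) = ℓ(→f) (i.e., there is no back-flow), then ℓ(→f)(→g) = ℓ(→(fg)). -/
/-- The meet-closed relation associated to a closure operator on `α × α`:
its set of stable (fixed) pairs. -/
def fixSet {α : Type*} [CompleteLattice α] (f : ClosureOperator (α × α)) : Set (α × α) :=
  {p | f p = p}

/-- Forward-flow: `ℓ(→f) = π_f (f (ℓ, ⊥))`. -/
def fwdFlow {α : Type*} [CompleteLattice α] (f : ClosureOperator (α × α)) (ℓ : α) : α :=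
  (f (ℓ, ⊥)).2

/-- Back-flow value: `ℓ(←f) = π_b (f (ℓ, ⊥))`. -/
def bwdFlow {α : Type*} [CompleteLattice α] (f : ClosureOperator (α × α)) (ℓ : α) : α :=
  (f (ℓ, ⊥)).1

/-!
The inequality `ℓ(→f)(→g) ≤ ℓ(→(fg))` holds unconditionally: the stable pair `(fg)(ℓ, ⊥) = (x, y)`
factors through some `z` with `(x, z)` stable for `f` and `(z, y)` stable for `g`, and minimality of the
closures `f (ℓ, ⊥)` and `g (ℓ(→f), ⊥)` bounds `ℓ(→f) ≤ z` and then `ℓ(→f)(→g) ≤ y`.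
Without back-flow, `(ℓ, ℓ(→f))` is stable for `f` and `(ℓ(→f), ℓ(→f)(→g))` is stable for `g`, so
`(ℓ, ℓ(→f)(→g))` is stable for `fg`, which gives the reverse inequality.
-/

section

variable {α : Type*} [CompleteLattice α]

theorem mem_fixSet_iff {f : ClosureOperator (α × α)} {p : α × α} :
    p ∈ fixSet f ↔ f.IsClosed p :=
  f.isClosed_iff.symm

theorem fwdFlow_le_of_mem_fixSet {f : ClosureOperator (α × α)} {ℓ a b : α}
    (hab : (a, b) ∈ fixSet f) (hℓ : ℓ ≤ a) : fwdFlow f ℓ ≤ b :=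
  (f.closure_min (Prod.mk_le_mk.2 ⟨hℓ, bot_le⟩) (mem_fixSet_iff.1 hab)).2

theorem mk_fwdFlow_mem_fixSet {f : ClosureOperator (α × α)} {ℓ : α}
    (hℓ : bwdFlow f ℓ = ℓ) : (ℓ, fwdFlow f ℓ) ∈ fixSet f := by
  have hclosure : f (ℓ, ⊥) = (ℓ, fwdFlow f ℓ) := Prod.ext hℓ rfl
  exact (congrArg f hclosure.symm).trans ((f.idempotent _).trans hclosure)

theorem fwdFlow_fwdFlow_le {f g h : ClosureOperator (α × α)}
    (hh : fixSet h ⊆ relComp (fixSet f) (fixSet g)) (ℓ : α) :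
    fwdFlow g (fwdFlow f ℓ) ≤ fwdFlow h ℓ := by
  obtain ⟨z, hfz, hgz⟩ := hh (show h (ℓ, ⊥) ∈ fixSet h from h.idempotent _)
  have hℓz : fwdFlow f ℓ ≤ z := fwdFlow_le_of_mem_fixSet hfz (h.le_closure (ℓ, ⊥)).1
  exact fwdFlow_le_of_mem_fixSet hgz hℓz

theorem fwdFlow_le_fwdFlow_fwdFlow {f g h : ClosureOperator (α × α)} {ℓ : α}
    (hh : relComp (fixSet f) (fixSet g) ⊆ fixSet h) (h₁ : bwdFlow f ℓ = ℓ)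
    (h₂ : bwdFlow g (fwdFlow f ℓ) = fwdFlow f ℓ) :
    fwdFlow h ℓ ≤ fwdFlow g (fwdFlow f ℓ) :=
  fwdFlow_le_of_mem_fixSet
    (hh ⟨fwdFlow f ℓ, mk_fwdFlow_mem_fixSet h₁, mk_fwdFlow_mem_fixSet h₂⟩) le_rfl

end

/-- Let `f, g` be closure operators on `L²` and `ℓ ∈ L`.  If `ℓ(←f) = ℓ` and
`(ℓ(→f))(←g) = ℓ(→f)` (no back-flow), then `ℓ(→f)(→g) = ℓ(→(fg))`, where `fg`
is the closure operator whose stable pairs are the relational composition of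
those of `f` and `g`. -/
theorem fwdFlow_comp_of_no_backflow (α : Type*) [CompleteLattice α]
    (f g h : ClosureOperator (α × α)) (ℓ : α)
    (hh : fixSet h = relComp (fixSet f) (fixSet g))
    (h₁ : bwdFlow f ℓ = ℓ)
    (h₂ : bwdFlow g (fwdFlow f ℓ) = fwdFlow f ℓ) :
    fwdFlow g (fwdFlow f ℓ) = fwdFlow h ℓ :=
  le_antisymm (fwdFlow_fwdFlow_le hh.subset ℓ) (fwdFlow_le_fwdFlow_fwdFlow hh.superset h₁ h₂)
end

section
/- Let f, g be closure operators on L² where L is a complete lattice, with Kleene star g* defined as the closure operator on L (viewed as a two-variable operator via partial identities) whose image is the fixed-point set of ḡ. Then: (1) f ≤ f·(←g) ≤ fg*; (2) gᵏ ≤ ⋁_{m≥0} gᵐ ≤ g* for all k ≥ 0; (3) (g*)* = g*; (4) (f ∨ g)* = f*g* = f* ∨ g* = g*f*; (5) (fg*)* = f* ∨ g* = (f*g)*. -/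
/-- Powers of a binary relation under relational composition, with the diagonal
relation as the zeroth power (the identity of the monoid). -/
def relPow {α : Type*} (g : Set (α × α)) : ℕ → Set (α × α)
  | 0 => {p | p.1 = p.2}
  | n + 1 => relComp (relPow g n) g

/-- The Kleene star of a closure operator on `L²`, viewed on the level of its
associated meet-closed relation: the partial identity on the fixed-point set
`fix ḡ = {ℓ : (ℓ, ℓ) ∈ ḡ}`. -/
def relStar {α : Type*} (g : Set (α × α)) : Set (α × α) :=
  {p | p.1 = p.2 ∧ p ∈ g}

/-- The back-flow operator, viewed as the partial identity on `dom ḡ`. -/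
def relBack {α : Type*} (g : Set (α × α)) : Set (α × α) :=
  {p | p.1 = p.2 ∧ ∃ y, (p.1, y) ∈ g}

/-- A binary relation on a complete lattice is meet-closed if closed under
arbitrary coordinatewise meets. -/
def MeetClosedRel {α : Type*} [CompleteLattice α] (f : Set (α × α)) : Prop :=
  ∀ S : Set (α × α), S ⊆ f → sInf S ∈ f

/-!
Both the star `g*` and the back-flow `←g` are partial identities, and composing a relation
with a partial identity on either side merely restricts the corresponding coordinate to the
identity's carrier. Hence stars of composites with a star are intersections of carriers, and
`relPow g k` contains `(ℓ, ℓ)` for every `ℓ ∈ fix ḡ` by following the loop `(ℓ, ℓ) ∈ ḡ` `k` times.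
-/

section RelStar

variable {α : Type*}

theorem mem_relStar {g : Set (α × α)} {p : α × α} : p ∈ relStar g ↔ p.1 = p.2 ∧ p ∈ g :=
  Iff.rfl

theorem mem_relComp_relStar_left {f h : Set (α × α)} {p : α × α} :
    p ∈ relComp (relStar f) h ↔ (p.1, p.1) ∈ f ∧ p ∈ h := by
  constructor
  · rintro ⟨z, ⟨hz : p.1 = z, hf⟩, hh⟩
    subst hz
    exact ⟨hf, hh⟩
  · rintro ⟨hf, hh⟩
    exact ⟨p.1, ⟨rfl, hf⟩, hh⟩

theorem mem_relComp_relStar_right {h g : Set (α × α)} {p : α × α} :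
    p ∈ relComp h (relStar g) ↔ p ∈ h ∧ (p.2, p.2) ∈ g := by
  constructor
  · rintro ⟨z, hh, ⟨hz : z = p.2, hg⟩⟩
    subst hz
    exact ⟨hh, hg⟩
  · rintro ⟨hh, hg⟩
    exact ⟨p.2, hh, ⟨rfl, hg⟩⟩

theorem relComp_mono_right {f g g' : Set (α × α)} (hg : g ⊆ g') :
    relComp f g ⊆ relComp f g' := fun _ ⟨z, hf, hz⟩ => ⟨z, hf, hg hz⟩

theorem relComp_relBack_subset (f g : Set (α × α)) : relComp f (relBack g) ⊆ f := by
  rintro ⟨x, y⟩ ⟨z, hxz, hzy, -⟩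
  obtain rfl : z = y := hzy
  exact hxz

theorem relStar_subset_relBack (g : Set (α × α)) : relStar g ⊆ relBack g :=
  fun p ⟨hp, hg⟩ => ⟨hp, p.2, hg⟩

theorem relStar_subset_relPow (g : Set (α × α)) (k : ℕ) : relStar g ⊆ relPow g k := by
  rintro ⟨x, y⟩ ⟨hxy, hx⟩
  obtain rfl : x = y := hxy
  induction k with
  | zero => rfl
  | succ n ih => exact ⟨x, ih, hx⟩

theorem relStar_mono {g g' : Set (α × α)} (hg : g ⊆ g') : relStar g ⊆ relStar g' :=
  fun _ ⟨hp, hp'⟩ => ⟨hp, hg hp'⟩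

theorem relStar_subset (g : Set (α × α)) : relStar g ⊆ g := fun _ hp => hp.2

theorem relStar_relStar (g : Set (α × α)) : relStar (relStar g) = relStar g := by
  ext p
  simp only [mem_relStar]
  tauto

theorem relStar_inter (f g : Set (α × α)) : relStar (f ∩ g) = relStar f ∩ relStar g := by
  ext p
  simp only [mem_relStar, Set.mem_inter_iff]
  tauto

theorem relComp_relStar_relStar (f g : Set (α × α)) :
    relComp (relStar f) (relStar g) = relStar f ∩ relStar g := by
  ext ⟨x, y⟩
  simp only [mem_relComp_relStar_left, mem_relStar, Set.mem_inter_iff]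
  constructor
  · rintro ⟨hf, rfl, hg⟩
    exact ⟨⟨rfl, hf⟩, rfl, hg⟩
  · rintro ⟨⟨rfl, hf⟩, -, hg⟩
    exact ⟨hf, rfl, hg⟩

theorem relStar_relComp_relStar_right (f g : Set (α × α)) :
    relStar (relComp f (relStar g)) = relStar f ∩ relStar g := by
  ext ⟨x, y⟩
  simp only [mem_relStar, mem_relComp_relStar_right, Set.mem_inter_iff]
  constructor
  · rintro ⟨rfl, hf, hg⟩
    exact ⟨⟨rfl, hf⟩, rfl, hg⟩
  · rintro ⟨⟨rfl, hf⟩, -, hg⟩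
    exact ⟨rfl, hf, hg⟩

theorem relStar_relComp_relStar_left (f g : Set (α × α)) :
    relStar (relComp (relStar f) g) = relStar f ∩ relStar g := by
  ext ⟨x, y⟩
  simp only [mem_relStar, mem_relComp_relStar_left, Set.mem_inter_iff]
  constructor
  · rintro ⟨rfl, hf, hg⟩
    exact ⟨⟨rfl, hf⟩, rfl, hg⟩
  · rintro ⟨⟨rfl, hf⟩, -, hg⟩
    exact ⟨rfl, hf, hg⟩

end RelStar

theorem kleene_star_properties_general (α : Type*) [CompleteLattice α]
    (f g : Set (α × α)) :
    -- (1)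
    (relComp f (relBack g) ⊆ f ∧ relComp f (relStar g) ⊆ relComp f (relBack g)) ∧
    -- (2)
    ((∀ k : ℕ, (⋂ m : ℕ, relPow g m) ⊆ relPow g k) ∧ relStar g ⊆ ⋂ m : ℕ, relPow g m) ∧
    -- (3)
    ((∀ h h' : Set (α × α), MeetClosedRel h → MeetClosedRel h' → h' ⊆ h →
        relStar h' ⊆ relStar h) ∧
      (∀ h : Set (α × α), MeetClosedRel h → relStar h ⊆ h) ∧
      relStar (relStar g) = relStar g) ∧
    -- (4)
    (relStar (f ∩ g) = relComp (relStar f) (relStar g) ∧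
      relComp (relStar f) (relStar g) = relStar f ∩ relStar g ∧
      relStar f ∩ relStar g = relComp (relStar g) (relStar f)) ∧
    -- (5)
    (relStar (relComp f (relStar g)) = relStar f ∩ relStar g ∧
      relStar (relComp (relStar f) g) = relStar f ∩ relStar g) :=
  ⟨⟨relComp_relBack_subset f g, relComp_mono_right (relStar_subset_relBack g)⟩,
    ⟨Set.iInter_subset _, Set.subset_iInter (relStar_subset_relPow g)⟩,
    ⟨fun _ _ _ _ => relStar_mono, fun h _ => relStar_subset h, relStar_relStar g⟩,
    ⟨(relStar_inter f g).trans (relComp_relStar_relStar f g).symm, relComp_relStar_relStar f g,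
      (Set.inter_comm _ _).trans (relComp_relStar_relStar g f).symm⟩,
    relStar_relComp_relStar_right f g, relStar_relComp_relStar_left f g⟩

/-- Basic properties of the Kleene star in the ordered monoid of abstract flows,
stated on the level of the associated meet-closed relations (where the order of
closure operators is reverse inclusion of relations, products are relational
compositions, and joins are intersections):
(1) `f ≤ f·(←g) ≤ f g*`;
(2) `gᵏ ≤ ⋁_{m ≥ 0} gᵐ ≤ g*` for all `k ≥ 0`;
(3) `g ↦ g*` is a closure operator on `𝒞(L²)`, in particular `(g*)* = g*`;
(4) `(f ∨ g)* = f* g* = f* ∨ g* = g* f*`;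
(5) `(f g*)* = f* ∨ g* = (f* g)*`. -/
theorem kleene_star_properties (α : Type*) [CompleteLattice α]
    (f g : Set (α × α)) (hf : MeetClosedRel f) (hg : MeetClosedRel g) :
    -- (1)
    (relComp f (relBack g) ⊆ f ∧ relComp f (relStar g) ⊆ relComp f (relBack g)) ∧
    -- (2)
    ((∀ k : ℕ, (⋂ m : ℕ, relPow g m) ⊆ relPow g k) ∧ relStar g ⊆ ⋂ m : ℕ, relPow g m) ∧
    -- (3)
    ((∀ h h' : Set (α × α), MeetClosedRel h → MeetClosedRel h' → h' ⊆ h →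
        relStar h' ⊆ relStar h) ∧
      (∀ h : Set (α × α), MeetClosedRel h → relStar h ⊆ h) ∧
      relStar (relStar g) = relStar g) ∧
    -- (4)
    (relStar (f ∩ g) = relComp (relStar f) (relStar g) ∧
      relComp (relStar f) (relStar g) = relStar f ∩ relStar g ∧
      relStar f ∩ relStar g = relComp (relStar g) (relStar f)) ∧
    -- (5)
    (relStar (relComp f (relStar g)) = relStar f ∩ relStar g ∧
      relStar (relComp (relStar f) g) = relStar f ∩ relStar g) :=
  kleene_star_properties_general α f g
end

section
/- Let L be a finite lattice and f, g closure operators on L². A pair (ℓ, ℓ') ∈ L² satisfies: there exists ℓ'' with (ℓ, ℓ'') stable for (fg)^ω, (ℓ'', ℓ') stable for f, and (ℓ', ℓ'') stable for g — if and only if (ℓ, ℓ') is stable for f(gf)^{ω+*}. (Conjugated star theorem.) -/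
/-!
Since `(fg)^m f = f (gf)^m`, the right-hand side says `(ℓ, ℓ') ∈ (fg)^m f` and
`ℓ'` is a fixed point of `gf`, i.e. `ℓ' →g c →f ℓ'` for some `c`. This `c` is the required `ℓ''`:
`c` carries a loop `c →f ℓ' →g c` of `fg`, and `ℓ →(fg)^m · →f ℓ' →g c` is a path of `fg` of
length `m + 1`. Going around the loop `m - 1` more times gives a path of length `2m`, which by
idempotence of `(fg)^m` is a path of length `m`.
-/

section RelationAlgebra

variable {α : Type*}

theorem relComp_assoc (a b c : Set (α × α)) :
    relComp (relComp a b) c = relComp a (relComp b c) := by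
  ext ⟨x, y⟩
  constructor
  · rintro ⟨z, ⟨w, hxw, hwz⟩, hzy⟩
    exact ⟨w, hxw, z, hwz, hzy⟩
  · rintro ⟨w, hxw, z, hwz, hzy⟩
    exact ⟨z, ⟨w, hxw, hwz⟩, hzy⟩

theorem relComp_relPow_zero (r : Set (α × α)) : relComp r (relPow r 0) = r := by
  ext ⟨x, y⟩
  constructor
  · rintro ⟨z, hxz, (rfl : z = y)⟩
    exact hxz
  · intro hxy
    exact ⟨y, hxy, rfl⟩

theorem relPow_add (h : Set (α × α)) (a b : ℕ) :
    relPow h (a + b) = relComp (relPow h a) (relPow h b) := by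
  induction b with
  | zero => exact (relComp_relPow_zero _).symm
  | succ n ih =>
    show relComp (relPow h (a + n)) h = relComp (relPow h a) (relComp (relPow h n) h)
    rw [ih, relComp_assoc]

theorem relComp_relPow_comm (f g : Set (α × α)) (n : ℕ) :
    relComp (relPow (relComp f g) n) f = relComp f (relPow (relComp g f) n) := by
  induction n with
  | zero =>
    ext ⟨x, y⟩
    constructor
    · rintro ⟨z, (rfl : x = z), hxy⟩
      exact ⟨y, hxy, rfl⟩
    · rintro ⟨z, hxz, (rfl : z = y)⟩
      exact ⟨x, rfl, hxz⟩
  | succ n ih =>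
    show relComp (relComp (relPow (relComp f g) n) (relComp f g)) f =
      relComp f (relComp (relPow (relComp g f) n) (relComp g f))
    rw [relComp_assoc, relComp_assoc, ← relComp_assoc (relPow (relComp f g) n) f, ih,
      relComp_assoc]

theorem mem_relComp_relStar {r h : Set (α × α)} {x y : α} :
    (x, y) ∈ relComp r (relStar h) ↔ (x, y) ∈ r ∧ (y, y) ∈ h := by
  constructor
  · rintro ⟨z, hxz, (rfl : z = y), hyy⟩
    exact ⟨hxz, hyy⟩
  · rintro ⟨hxy, hyy⟩
    exact ⟨y, hxy, rfl, hyy⟩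

theorem mem_relPow_add_of_loop {h : Set (α × α)} {x y : α} {n : ℕ}
    (hxy : (x, y) ∈ relPow h n) (hyy : (y, y) ∈ h) (k : ℕ) : (x, y) ∈ relPow h (n + k) := by
  induction k with
  | zero => exact hxy
  | succ k ih => exact ⟨y, ih, hyy⟩

theorem mem_relPow_of_mem_relPow_succ {h : Set (α × α)} {m : ℕ} (hm : 0 < m)
    (hidem : relComp (relPow h m) (relPow h m) = relPow h m) {x y : α}
    (hxy : (x, y) ∈ relPow h (m + 1)) (hyy : (y, y) ∈ h) : (x, y) ∈ relPow h m := by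
  have h2m := mem_relPow_add_of_loop hxy hyy (m - 1)
  rwa [show m + 1 + (m - 1) = m + m by omega, relPow_add, hidem] at h2m

end RelationAlgebra

theorem conjugated_star_general (α : Type*)
    (f g : Set (α × α))
    (m : ℕ) (hm : 0 < m)
    (hfg : relComp (relPow (relComp f g) m) (relPow (relComp f g) m) =
      relPow (relComp f g) m)
    (ℓ ℓ' : α) :
    (∃ ℓ'' : α, (ℓ, ℓ'') ∈ relPow (relComp f g) m ∧ (ℓ'', ℓ') ∈ f ∧ (ℓ', ℓ'') ∈ g) ↔
      (ℓ, ℓ') ∈ relComp f (relComp (relPow (relComp g f) m) (relStar (relComp g f))) := by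
  rw [← relComp_assoc, ← relComp_relPow_comm, mem_relComp_relStar]
  constructor
  · rintro ⟨c, hℓc, hcℓ', hℓ'c⟩
    exact ⟨⟨c, hℓc, hcℓ'⟩, ⟨c, hℓ'c, hcℓ'⟩⟩
  · rintro ⟨⟨u, hℓu, huℓ'⟩, ⟨c, hℓ'c, hcℓ'⟩⟩
    have hpath : (ℓ, c) ∈ relPow (relComp f g) (m + 1) := ⟨u, hℓu, ℓ', huℓ', hℓ'c⟩
    have hloop : (c, c) ∈ relComp f g := ⟨ℓ', hcℓ', hℓ'c⟩
    exact ⟨c, mem_relPow_of_mem_relPow_succ hm hfg hpath hloop, hcℓ', hℓ'c⟩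

/-- Conjugated star theorem.  Let `L` be a finite lattice and `f, g` closure
operators on `L²` (given by their meet-closed relations), with `(fg)^ω` and
`(gf)^ω` the respective idempotent powers (both equal to the `m`-th power).
A pair `(ℓ, ℓ')` satisfies: there exists `ℓ''` with `(ℓ, ℓ'')` stable for
`(fg)^ω`, `(ℓ'', ℓ')` stable for `f`, and `(ℓ', ℓ'')` stable for `g` — if and
only if `(ℓ, ℓ')` is stable for `f (gf)^{ω+*}`, where
`(gf)^{ω+*} = (gf)^ω (gf)*`. -/
theorem conjugated_star (α : Type*) [CompleteLattice α] [Fintype α]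
    (f g : Set (α × α)) (hf : MeetClosedRel f) (hg : MeetClosedRel g)
    (m : ℕ) (hm : 0 < m)
    (hfg : relComp (relPow (relComp f g) m) (relPow (relComp f g) m) =
      relPow (relComp f g) m)
    (hgf : relComp (relPow (relComp g f) m) (relPow (relComp g f) m) =
      relPow (relComp g f) m)
    (ℓ ℓ' : α) :
    (∃ ℓ'' : α, (ℓ, ℓ'') ∈ relPow (relComp f g) m ∧ (ℓ'', ℓ') ∈ f ∧ (ℓ', ℓ'') ∈ g) ↔
      (ℓ, ℓ') ∈ relComp f (relComp (relPow (relComp g f) m) (relStar (relComp g f))) :=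
  conjugated_star_general α f g m hm hfg ℓ ℓ'
end

section
/- Let 𝒜 = (Q, δ) be an L-automaton and q ≠ q' ∈ Q. The sampling operator 𝒜(q,q'), defined by labelling q with ℓ, q' with ℓ', all other states with the bottom B, taking the least flow above this labelling, and reading off the values at q and q', is a closure operator on L²; moreover (ℓ, ℓ') is stable for 𝒜(q,q') if and only if there exists a flow F on 𝒜 with qF = ℓ and q'F = ℓ'. -/
/-- An `L`-flow on an `L`-automaton: the labels of the endpoints of every edge
form a stable pair for the closure operator labelling that edge. -/
def IsFlow {α Q E : Type*} [CompleteLattice α]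
    (src tgt : E → Q) (lab : E → ClosureOperator (α × α)) (F : Q → α) : Prop :=
  ∀ e : E, lab e (F (src e), F (tgt e)) = (F (src e), F (tgt e))

/-- The least flow above a labelling `f : Q → L` (flows being meet-closed in `L^Q`). -/
noncomputable def minFlow {α Q E : Type*} [CompleteLattice α]
    (src tgt : E → Q) (lab : E → ClosureOperator (α × α)) (f : Q → α) : Q → α :=
  sInf {F | IsFlow src tgt lab F ∧ f ≤ F}

open Classical in
/-- The labelling of `Q` putting `ℓ` at `q`, `ℓ'` at `q'` and the bottom `⊥`
everywhere else. -/
noncomputable def pointLabel {α Q : Type*} [CompleteLattice α]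
    (q q' : Q) (ℓ ℓ' : α) : Q → α :=
  fun p => if p = q then ℓ else if p = q' then ℓ' else ⊥

/-- The sampling operation `𝒜(q, q')`: label `q` with `ℓ`, `q'` with `ℓ'`, all
other states with `⊥`, take the least flow above this labelling, and read off
the values at `q` and `q'`. -/
noncomputable def sample {α Q E : Type*} [CompleteLattice α]
    (src tgt : E → Q) (lab : E → ClosureOperator (α × α)) (q q' : Q)
    (p : α × α) : α × α :=
  (minFlow src tgt lab (pointLabel q q' p.1 p.2) q,
   minFlow src tgt lab (pointLabel q q' p.1 p.2) q')

/-!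
Sampling factors as `u ∘ Φ ∘ l`, where `Φ` is the closure operator "least flow above" on `L^Q`
and `l = pointLabel q q'` is left adjoint to the restriction `u F = (F q, F q')`. Composing the
Galois connection `l ⊣ u` with the Galois insertion of `Φ` into its closed elements gives a Galois
connection whose closure operator is `u ∘ Φ ∘ l`, and the closed elements of such a closure
operator are exactly the image of the upper adjoint, here the restrictions of flows.
-/

theorem GaloisConnection.isClosed_closureOperator_iff {α β : Type*} [PartialOrder α]
    [Preorder β] {l : α → β} {u : β → α} (gc : GaloisConnection l u) {a : α} :
    gc.closureOperator.IsClosed a ↔ a ∈ Set.range u :=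
  gc.closureOperator.isClosed_iff.trans
    ⟨fun h => ⟨l a, h⟩, by rintro ⟨b, rfl⟩; exact gc.u_l_u_eq_u b⟩

section Flow

variable {α Q E : Type*} [CompleteLattice α] {src tgt : E → Q}
  {lab : E → ClosureOperator (α × α)}

theorem isFlow_sInf {S : Set (Q → α)} (hS : ∀ F ∈ S, IsFlow src tgt lab F) :
    IsFlow src tgt lab (sInf S) := fun e => by
  have below : ∀ F ∈ S, lab e (sInf S (src e), sInf S (tgt e)) ≤ (F (src e), F (tgt e)) :=
    fun F hF => hS F hF e ▸ (lab e).monotone ⟨sInf_le hF (src e), sInf_le hF (tgt e)⟩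
  refine le_antisymm (Prod.le_def.2 ⟨?_, ?_⟩) ((lab e).le_closure _)
  · exact (le_iInf fun F : S => (below F F.2).1).trans_eq sInf_apply.symm
  · exact (le_iInf fun F : S => (below F F.2).2).trans_eq sInf_apply.symm

variable (src tgt lab) in
theorem le_minFlow (f : Q → α) : f ≤ minFlow src tgt lab f :=
  le_sInf fun _ hF => hF.2

theorem minFlow_le {f F : Q → α} (hF : IsFlow src tgt lab F) (hfF : f ≤ F) :
    minFlow src tgt lab f ≤ F :=
  sInf_le ⟨hF, hfF⟩

theorem isFlow_minFlow (f : Q → α) : IsFlow src tgt lab (minFlow src tgt lab f) :=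
  isFlow_sInf fun _ hF => hF.1

variable (src tgt lab) in
/-- `𝒜̄`, with the flows as its closed elements. -/
noncomputable def flowClosure : ClosureOperator (Q → α) :=
  .ofPred (minFlow src tgt lab) (IsFlow src tgt lab) (le_minFlow src tgt lab) isFlow_minFlow
    fun _ _ hfF hF => minFlow_le hF hfF

end Flow

theorem pointLabel_gc {α Q : Type*} [CompleteLattice α] {q q' : Q} (hqq' : q ≠ q') :
    GaloisConnection (fun p : α × α => pointLabel q q' p.1 p.2) (fun F => (F q, F q')) := by
  classical
  rintro ⟨ℓ, ℓ'⟩ F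
  refine ⟨fun h => ⟨by simpa [pointLabel] using h q, by simpa [pointLabel, hqq'.symm] using h q'⟩,
    fun ⟨hq, hq'⟩ p => ?_⟩
  dsimp only [pointLabel]
  split_ifs with hp hp'
  · exact hp ▸ hq
  · exact hp' ▸ hq'
  · exact bot_le

section Sample

variable {α Q E : Type*} [CompleteLattice α] (src tgt : E → Q)
  (lab : E → ClosureOperator (α × α)) {q q' : Q} (hqq' : q ≠ q')

noncomputable def sampleClosure : ClosureOperator (α × α) :=
  ((pointLabel_gc hqq').compose (flowClosure src tgt lab).gi.gc).closureOperator

theorem sampleClosure_apply (p : α × α) :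
    sampleClosure src tgt lab hqq' p = sample src tgt lab q q' p :=
  rfl

theorem isClosed_sampleClosure_iff {ℓ ℓ' : α} :
    (sampleClosure src tgt lab hqq').IsClosed (ℓ, ℓ') ↔
      ∃ F : Q → α, IsFlow src tgt lab F ∧ F q = ℓ ∧ F q' = ℓ' := by
  rw [sampleClosure, GaloisConnection.isClosed_closureOperator_iff]
  simp [ClosureOperator.Closeds, flowClosure, and_left_comm]

end Sample

theorem sample_closureOperator_general (α Q E : Type*) [CompleteLattice α]
    (src tgt : E → Q) (lab : E → ClosureOperator (α × α))
    (q q' : Q) (hqq' : q ≠ q') :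
    ∃ c : ClosureOperator (α × α),
      (∀ p : α × α, c p = sample src tgt lab q q' p) ∧
      (∀ ℓ ℓ' : α, c (ℓ, ℓ') = (ℓ, ℓ') ↔
        ∃ F : Q → α, IsFlow src tgt lab F ∧ F q = ℓ ∧ F q' = ℓ') :=
  ⟨sampleClosure src tgt lab hqq', sampleClosure_apply src tgt lab hqq', fun _ _ =>
    (sampleClosure src tgt lab hqq').isClosed_iff.symm.trans
      (isClosed_sampleClosure_iff src tgt lab hqq')⟩

/-- Sampling an `L`-automaton at two distinct states `q ≠ q'` yields a closure
operator on `L²`; moreover `(ℓ, ℓ')` is stable for `𝒜(q, q')` if and only if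
there is a flow `F` on `𝒜` with `F q = ℓ` and `F q' = ℓ'`. -/
theorem sample_closureOperator (α Q E : Type*) [CompleteLattice α]
    [Fintype Q] [Fintype E]
    (src tgt : E → Q) (lab : E → ClosureOperator (α × α))
    (q q' : Q) (hqq' : q ≠ q') :
    ∃ c : ClosureOperator (α × α),
      (∀ p : α × α, c p = sample src tgt lab q q' p) ∧
      (∀ ℓ ℓ' : α, c (ℓ, ℓ') = (ℓ, ℓ') ↔
        ∃ F : Q → α, IsFlow src tgt lab F ∧ F q = ℓ ∧ F q' = ℓ') :=
  sample_closureOperator_general α Q E src tgt lab q q' hqq'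
end

section
/- Let f₁, …, fₙ be closure operators on L² and let 𝒜 be the L-automaton which is a path q₀ →^{f₁} q₁ →^{f₂} ⋯ →^{fₙ} qₙ. Then sampling 𝒜 at (q₀, qₙ) yields the product f₁f₂⋯fₙ. -/
/-- The composed relation of a finite family of relations (the empty
composition being the diagonal, i.e. the identity of the monoid). -/
def relCompFam {α : Type*} : (n : ℕ) → (Fin n → Set (α × α)) → Set (α × α)
  | 0, _ => {p | p.1 = p.2}
  | n + 1, r => relComp (relCompFam n (fun i => r i.castSucc)) (r (Fin.last n))

/-- Flows on the path automaton `q₀ →^{f₁} q₁ →^{f₂} ⋯ →^{fₙ} qₙ`. -/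
def IsPathFlow {α : Type*} [CompleteLattice α] (n : ℕ)
    (f : Fin n → ClosureOperator (α × α)) (F : Fin (n + 1) → α) : Prop :=
  ∀ i : Fin n, f i (F i.castSucc, F i.succ) = (F i.castSucc, F i.succ)

/-- The least flow on the path automaton above a labelling. -/
noncomputable def minPathFlow {α : Type*} [CompleteLattice α] (n : ℕ)
    (f : Fin n → ClosureOperator (α × α)) (g : Fin (n + 1) → α) : Fin (n + 1) → α :=
  sInf {F | IsPathFlow n f F ∧ g ≤ F}

open Classical in
/-- Sampling the path automaton at its first and last states. -/
noncomputable def pathSample {α : Type*} [CompleteLattice α] (n : ℕ)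
    (f : Fin n → ClosureOperator (α × α)) (p : α × α) : α × α :=
  (minPathFlow n f (fun q => if q = 0 then p.1 else if q = Fin.last n then p.2 else ⊥) 0,
   minPathFlow n f (fun q => if q = 0 then p.1 else if q = Fin.last n then p.2 else ⊥)
     (Fin.last n))


/-!
A chain `ℓ₀, …, ℓₙ` with each `(ℓᵢ₋₁, ℓᵢ)` stable under `fᵢ` is exactly a flow on the path
automaton, so the composed relation consists of the boundary values `(F q₀, F qₙ)` of flows `F`.
Conversely, sampling at `(ℓ, ℓ')` computes the least flow above the labelling which is `ℓ` at `q₀`,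
`ℓ'` at `qₙ` and `⊥` elsewhere (flows are closed under infima); if some flow has boundary values
`(ℓ, ℓ')`, the least flow is squeezed between the labelling and that flow at both ends, so `(ℓ, ℓ')`
is stable.
-/

theorem mem_relCompFam_iff {α : Type*} (n : ℕ) (r : Fin n → Set (α × α)) (p : α × α) :
    p ∈ relCompFam n r ↔ ∃ z : Fin (n + 1) → α, z 0 = p.1 ∧ z (Fin.last n) = p.2 ∧
      ∀ i : Fin n, (z i.castSucc, z i.succ) ∈ r i := by
  induction n generalizing p with
  | zero =>
    refine ⟨fun h => ⟨fun _ => p.1, rfl, h, fun i => i.elim0⟩, ?_⟩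
    rintro ⟨z, h0, hlast, -⟩
    exact h0.symm.trans hlast
  | succ n ih =>
    constructor
    · rintro ⟨w, hw, hlast⟩
      obtain ⟨z, h0, hw', hz⟩ := (ih _ (p.1, w)).mp hw
      refine ⟨Fin.snoc z p.2, h0, Fin.snoc_last _ _, Fin.lastCases ?_ fun j => ?_⟩
      · simpa only [Fin.succ_last, Fin.snoc_last, Fin.snoc_castSucc, hw'] using hlast
      · simpa only [Fin.succ_castSucc, Fin.snoc_castSucc] using hz j
    · rintro ⟨z, h0, hlast, hz⟩
      refine ⟨z (Fin.last n).castSucc,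
        (ih _ _).mpr ⟨fun i => z i.castSucc, h0, rfl, fun i => ?_⟩, ?_⟩
      · simpa only [Fin.succ_castSucc] using hz i.castSucc
      · simpa only [Fin.succ_last, hlast] using hz (Fin.last n)

section PathAutomaton

variable {α : Type*} [CompleteLattice α] {n : ℕ} {f : Fin n → ClosureOperator (α × α)}

theorem isPathFlow_sInf {S : Set (Fin (n + 1) → α)} (hS : ∀ F ∈ S, IsPathFlow n f F) :
    IsPathFlow n f (sInf S) := by
  intro i
  have hpair : (sInf S i.castSucc, sInf S i.succ) =
      sInf ((fun F : Fin (n + 1) → α => (F i.castSucc, F i.succ)) '' S) := by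
    ext <;> simp [sInf_apply, sInf_image, iInf_subtype', Prod.fst_iInf, Prod.snd_iInf]
  rw [hpair]
  refine (ClosureOperator.sInf_isClosed ?_).closure_eq
  rintro _ ⟨F, hF, rfl⟩
  exact (f i).isClosed_iff.mpr (hS F hF i)

theorem isPathFlow_minPathFlow (g : Fin (n + 1) → α) : IsPathFlow n f (minPathFlow n f g) :=
  isPathFlow_sInf fun _ hF => hF.1

theorem le_minPathFlow (g : Fin (n + 1) → α) : g ≤ minPathFlow n f g :=
  le_sInf fun _ hF => hF.2

theorem minPathFlow_le {g F : Fin (n + 1) → α} (hF : IsPathFlow n f F) (hgF : g ≤ F) :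
    minPathFlow n f g ≤ F :=
  sInf_le ⟨hF, hgF⟩

theorem minPathFlow_apply_eq {g F : Fin (n + 1) → α} (hF : IsPathFlow n f F) (hgF : g ≤ F)
    {q : Fin (n + 1)} (hq : g q = F q) : minPathFlow n f g q = F q :=
  le_antisymm (minPathFlow_le hF hgF q) (hq ▸ le_minPathFlow g q)

end PathAutomaton

section Sampling

variable {α : Type*} [CompleteLattice α] {n : ℕ}

def boundaryLabel (n : ℕ) (p : α × α) : Fin (n + 1) → α :=
  fun q => if q = 0 then p.1 else if q = Fin.last n then p.2 else ⊥

theorem boundaryLabel_zero (p : α × α) : boundaryLabel n p 0 = p.1 :=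
  if_pos rfl

theorem boundaryLabel_le {p : α × α} {F : Fin (n + 1) → α} (h0 : p.1 ≤ F 0)
    (hlast : p.2 ≤ F (Fin.last n)) : boundaryLabel n p ≤ F := by
  intro q
  unfold boundaryLabel
  split_ifs with hq0 hqlast
  · exact hq0 ▸ h0
  · exact hqlast ▸ hlast
  · exact bot_le

-- For `n = 0` the labelling reads `p.1` at `Fin.last 0 = 0`; it agrees with `F` there only
-- because the hypotheses then force `p.1 = p.2`.
theorem boundaryLabel_last {p : α × α} {F : Fin (n + 1) → α} (h0 : F 0 = p.1)
    (hlast : F (Fin.last n) = p.2) : boundaryLabel n p (Fin.last n) = F (Fin.last n) := by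
  unfold boundaryLabel
  split_ifs with h hlast'
  · rw [← h0, ← h]
  · exact hlast.symm
  · exact absurd rfl hlast'

theorem pathSample_eq_self_iff (f : Fin n → ClosureOperator (α × α)) (p : α × α) :
    pathSample n f p = p ↔
      ∃ F, F 0 = p.1 ∧ F (Fin.last n) = p.2 ∧ IsPathFlow n f F := by
  change (minPathFlow n f (boundaryLabel n p) 0,
    minPathFlow n f (boundaryLabel n p) (Fin.last n)) = p ↔ _
  constructor
  · intro h
    exact ⟨_, congrArg Prod.fst h, congrArg Prod.snd h, isPathFlow_minPathFlow _⟩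
  · rintro ⟨F, h0, hlast, hF⟩
    have hle : boundaryLabel n p ≤ F := boundaryLabel_le h0.ge hlast.ge
    refine Prod.ext ?_ ?_
    · exact (minPathFlow_apply_eq hF hle (by rw [boundaryLabel_zero, h0])).trans h0
    · exact (minPathFlow_apply_eq hF hle (boundaryLabel_last h0 hlast)).trans hlast

end Sampling

theorem pathSample_eq_product_general (α : Type*) [CompleteLattice α]
    (n : ℕ) (f : Fin n → ClosureOperator (α × α)) :
    {p : α × α | pathSample n f p = p} = relCompFam n (fun i => fixSet (f i)) := by
  ext p
  exact (pathSample_eq_self_iff f p).trans (mem_relCompFam_iff n (fun i => fixSet (f i)) p).symm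

/-- Let `f₁, …, fₙ` be closure operators on `L²` and `𝒜` the path automaton
`q₀ →^{f₁} q₁ →^{f₂} ⋯ →^{fₙ} qₙ`.  Then sampling `𝒜` at `(q₀, qₙ)` yields the
product `f₁ f₂ ⋯ fₙ`: the stable pairs of the sampling operator are exactly the
relational composition of the stable-pair relations of the `fᵢ`. -/
theorem pathSample_eq_product (α : Type*) [CompleteLattice α]
    (n : ℕ) (hn : 0 < n) (f : Fin n → ClosureOperator (α × α)) :
    {p : α × α | pathSample n f p = p} = relCompFam n (fun i => fixSet (f i)) :=
  pathSample_eq_product_general α n f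
end

section
/- Let M be a finite X-generated monoid acting by partial transformations on a set R (faithfully on the right), and for x ∈ X define a relation on the set-partition lattice SP(R) by (U,P) → (Y,Q) iff Ux ⊆ Y and right multiplication by x induces a well-defined partially-defined injective map U/P → Y/Q. Then this relation is meet-closed in SP(R)² (i.e., it defines an abstract flow): it contains the pair of tops, and if (U₁,P₁) → (Y₁,Q₁) and (U₂,P₂) → (Y₂,Q₂) then (U₁∩U₂, P₁∧P₂) → (Y₁∩Y₂, Q₁∧Q₂). -/
/-- An element of the set-partition lattice `SP(R)`: a pair `(Y, P)` of a subset
`Y ⊆ R` with a partition `P` of `Y`, encoded as a partial equivalence relation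
on `R`; `Y = {a | rel a a}`. -/
structure SP (R : Type*) where
  rel : R → R → Prop
  symm : ∀ {a b}, rel a b → rel b a
  trans : ∀ {a b c}, rel a b → rel b c → rel a c

/-- The meet `(U₁ ∩ U₂, P₁ ∧ P₂)` in the set-partition lattice. -/
def SP.meet {R : Type*} (p q : SP R) : SP R where
  rel a b := p.rel a b ∧ q.rel a b
  symm h := ⟨p.symm h.1, q.symm h.2⟩
  trans h h' := ⟨p.trans h.1 h'.1, q.trans h.2 h'.2⟩

/-- The top `(R, {R})` of the set-partition lattice. -/
def SP.topSP {R : Type*} : SP R where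
  rel _ _ := True
  symm _ := trivial
  trans _ _ := trivial

/-- For a generator `x` acting on `R` by the partial transformation `f`
(`f a = some b` meaning `a · x = b`), the free-flow relation on `SP(R)`:
`(U, P) → (Y, Q)` iff `U x ⊆ Y` and right multiplication by `x` induces a
well-defined partially-defined injective map `U/P → Y/Q`, i.e. for `m, n ∈ U`
with `m x, n x` defined (hence in `Y`), `m P n ↔ (m x) Q (n x)`. -/
def SPFlow {R : Type*} (f : R → Option R) (p q : SP R) : Prop :=
  (∀ a b, p.rel a a → f a = some b → q.rel b b) ∧
  (∀ m n m' n', p.rel m m → p.rel n n → f m = some m' → f n = some n' →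
    (p.rel m n ↔ q.rel m' n'))

theorem SPFlow.topSP_topSP {R : Type*} (f : R → Option R) : SPFlow f SP.topSP SP.topSP :=
  ⟨fun _ _ _ _ => trivial, fun _ _ _ _ _ _ _ _ => Iff.rfl⟩

theorem SPFlow.meet {R : Type*} {f : R → Option R} {p₁ q₁ p₂ q₂ : SP R}
    (h₁ : SPFlow f p₁ q₁) (h₂ : SPFlow f p₂ q₂) :
    SPFlow f (p₁.meet p₂) (q₁.meet q₂) :=
  ⟨fun a b ha hfa => ⟨h₁.1 a b ha.1 hfa, h₂.1 a b ha.2 hfa⟩,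
    fun m n m' n' hm hn hfm hfn =>
      and_congr (h₁.2 m n m' n' hm.1 hn.1 hfm hfn) (h₂.2 m n m' n' hm.2 hn.2 hfm hfn)⟩

theorem SPFlow_meetClosed_general (R : Type*) (f : R → Option R) :
    SPFlow f SP.topSP SP.topSP ∧
    (∀ p₁ q₁ p₂ q₂ : SP R, SPFlow f p₁ q₁ → SPFlow f p₂ q₂ →
      SPFlow f (SP.meet p₁ p₂) (SP.meet q₁ q₂)) :=
  ⟨SPFlow.topSP_topSP f, fun _ _ _ _ => SPFlow.meet⟩

/-- Let `M` be a finite `X`-generated monoid acting by partial transformations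
on `R`, and let `x ∈ X` act by the partial function `f`.  The free-flow relation
on the set-partition lattice `SP(R)` determined by `x` is meet-closed in
`SP(R)²`, i.e. it defines an abstract flow: it contains the pair of tops, and if
`(U₁, P₁) → (Y₁, Q₁)` and `(U₂, P₂) → (Y₂, Q₂)` then
`(U₁ ∩ U₂, P₁ ∧ P₂) → (Y₁ ∩ Y₂, Q₁ ∧ Q₂)`. -/
theorem SPFlow_meetClosed (R : Type*) [Fintype R] (f : R → Option R) :
    SPFlow f SP.topSP SP.topSP ∧
    (∀ p₁ q₁ p₂ q₂ : SP R, SPFlow f p₁ q₁ → SPFlow f p₂ q₂ →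
      SPFlow f (SP.meet p₁ p₂) (SP.meet q₁ q₂)) :=
  SPFlow_meetClosed_general R f
end

section
/- Let S be a finite monoid, s ∈ S, and V a pseudovariety of finite monoids. Then s is V-aperiodic if and only if s is (A ⓜ V)-aperiodic, where A is the pseudovariety of aperiodic monoids and ⓜ denotes Mal'cev product. -/
/-- A relational morphism `φ : S → T` of monoids: a fully-defined relation
whose graph is a submonoid of `S × T`. -/
structure RelMorph (S T : Type) [Monoid S] [Monoid T] where
  rel : S → Set T
  nonempty : ∀ s, (rel s).Nonempty
  one_mem : (1 : T) ∈ rel 1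
  mul_mem : ∀ s s' t t', t ∈ rel s → t' ∈ rel s' → t * t' ∈ rel (s * s')

/-- An element `t` of a finite monoid is aperiodic if `t^ω = t^{ω+1}`,
equivalently some positive power of `t` equals the next power. -/
def IsAperiodicElem {T : Type} [Monoid T] (t : T) : Prop :=
  ∃ n : ℕ, t ^ (n + 1) = t ^ (n + 2)

/-- An element `s` of a finite monoid `S` is `V`-aperiodic if for every
relational morphism `φ : S → T` with `T ∈ V` there is an aperiodic `t ∈ s φ`. -/
def IsVAperiodic (V : ∀ (T : Type) [Monoid T] [Fintype T], Prop)
    (S : Type) [Monoid S] [Fintype S] (s : S) : Prop :=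
  ∀ (T : Type) (_ : Monoid T) (_ : Fintype T), V T →
    ∀ φ : RelMorph S T, ∃ t ∈ φ.rel s, IsAperiodicElem t

/-- Membership in the Mal'cev product `A ⓜ V`, where `A` is the pseudovariety of
aperiodic monoids: `T ∈ A ⓜ V` iff there is a relational morphism `ψ : T → U`
with `U ∈ V` such that for every idempotent `e ∈ U` the preimage `e ψ⁻¹` is
aperiodic (all its elements are aperiodic). -/
def InMalcevAperiodic (V : ∀ (T : Type) [Monoid T] [Fintype T], Prop)
    (T : Type) [Monoid T] [Fintype T] : Prop :=
  ∃ (U : Type) (_ : Monoid U) (_ : Fintype U), V U ∧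
    ∃ ψ : RelMorph T U, ∀ e : U, e * e = e → ∀ t : T, e ∈ ψ.rel t → IsAperiodicElem t

/-!
Every monoid of `V` lies in `A ⓜ V` (take the identity relational morphism), so
`A ⓜ V`-aperiodicity implies `V`-aperiodicity. Conversely, given `φ : S → T` with `T ∈ A ⓜ V`
witnessed by `ψ : T → U`, apply `V`-aperiodicity to the composite `φψ` to get an aperiodic `u`
related to some `t ∈ sφ`. For `k` large with `t ^ k` idempotent, `u ^ k` is an idempotent related
to `t ^ (k + 1)`, so `t ^ (k + 1)` is aperiodic, and then so is `t`.
-/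

namespace RelMorph

variable {S T U : Type} [Monoid S] [Monoid T] [Monoid U]

def id (T : Type) [Monoid T] : RelMorph T T where
  rel t := {t}
  nonempty t := Set.singleton_nonempty t
  one_mem := rfl
  mul_mem := by rintro _ _ _ _ rfl rfl; rfl

def comp (φ : RelMorph S T) (ψ : RelMorph T U) : RelMorph S U where
  rel s := {u | ∃ t ∈ φ.rel s, u ∈ ψ.rel t}
  nonempty s := by
    obtain ⟨t, ht⟩ := φ.nonempty s
    obtain ⟨u, hu⟩ := ψ.nonempty t
    exact ⟨u, t, ht, hu⟩
  one_mem := ⟨1, φ.one_mem, ψ.one_mem⟩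
  mul_mem := by
    rintro s s' u u' ⟨t, ht, hu⟩ ⟨t', ht', hu'⟩
    exact ⟨t * t', φ.mul_mem _ _ _ _ ht ht', ψ.mul_mem _ _ _ _ hu hu'⟩

theorem pow_mem (φ : RelMorph S T) {s : S} {t : T} (h : t ∈ φ.rel s) (k : ℕ) :
    t ^ k ∈ φ.rel (s ^ k) := by
  induction k with
  | zero => simpa using φ.one_mem
  | succ k ih => simpa only [pow_succ] using φ.mul_mem _ _ _ _ ih h

end RelMorph

section Powers

variable {M : Type} [Monoid M]

theorem exists_pos_isIdempotentElem_pow [Finite M] (a : M) :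
    ∃ m, 0 < m ∧ IsIdempotentElem (a ^ m) := by
  obtain ⟨i, j, hij, hpow⟩ := Set.finite_univ.exists_lt_map_eq_of_forall_mem
    (f := (a ^ ·)) fun _ => Set.mem_univ _
  obtain ⟨p, rfl⟩ := Nat.exists_eq_add_of_lt hij
  have hper : ∀ c, a ^ i * (a ^ (p + 1)) ^ c = a ^ i := by
    intro c
    induction c with
    | zero => rw [pow_zero, mul_one]
    | succ c ih =>
      rw [pow_succ, ← mul_assoc, ih, ← pow_add]
      exact hpow.symm.trans (by ring_nf)
  -- `m` is a multiple of the period `p + 1` of the powers of `a` that is at least the index `i`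
  set m := (p + 1) * (i + 1)
  have him : i ≤ m := (Nat.le_succ i).trans (Nat.le_mul_of_pos_left _ p.succ_pos)
  have hm : a ^ m = a ^ (m - i) * a ^ i := by rw [← pow_add, Nat.sub_add_cancel him]
  refine ⟨m, by positivity, ?_⟩
  calc a ^ m * a ^ m = a ^ (m - i) * (a ^ i * (a ^ (p + 1)) ^ (i + 1)) := by
        rw [← mul_assoc, ← hm, ← pow_mul]
    _ = a ^ m := by rw [hper, hm]

theorem pow_eq_of_pow_eq_pow_succ {a : M} {n j : ℕ} (h : a ^ n = a ^ (n + 1)) (hj : n ≤ j) :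
    a ^ j = a ^ n := by
  induction j, hj using Nat.le_induction with
  | base => rfl
  | succ j _ ih => rw [pow_succ, ih, ← pow_succ, ← h]

theorem isAperiodicElem_iff {a : M} : IsAperiodicElem a ↔ ∃ n, a ^ n = a ^ (n + 1) :=
  ⟨fun ⟨n, h⟩ => ⟨n + 1, h⟩,
    fun ⟨n, h⟩ => ⟨n, by rw [pow_succ a (n + 1), ← h, ← pow_succ]; exact h⟩⟩

theorem IsIdempotentElem.isAperiodicElem {e : M} (he : IsIdempotentElem e) :
    IsAperiodicElem e :=
  isAperiodicElem_iff.2 ⟨1, by rw [pow_one, pow_two, he.eq]⟩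

theorem isAperiodicElem_of_isIdempotentElem_pow {a : M} {k : ℕ}
    (hk : IsIdempotentElem (a ^ k)) (h : IsAperiodicElem (a ^ (k + 1))) : IsAperiodicElem a := by
  obtain ⟨N, hN⟩ := isAperiodicElem_iff.1 h
  obtain ⟨n, hn⟩ : ∃ n, a ^ n * a ^ (k + 1) = a ^ n :=
    ⟨(k + 1) * N, by rw [← pow_add, ← mul_add_one, pow_mul, pow_mul, hN]⟩
  refine isAperiodicElem_iff.2 ⟨n + k, ?_⟩
  calc a ^ (n + k) = a ^ n * a ^ (k + 1) * a ^ k := by rw [hn, pow_add]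
    _ = a ^ n * (a ^ k * a ^ k) * a := by simp only [← pow_add, ← pow_succ]; ring_nf
    _ = a ^ (n + k + 1) := by rw [hk.eq, ← pow_add, ← pow_succ]

end Powers

theorem RelMorph.isAperiodicElem_of_mem {T U : Type} [Monoid T] [Finite T] [Monoid U]
    (ψ : RelMorph T U) (hψ : ∀ e : U, e * e = e → ∀ t : T, e ∈ ψ.rel t → IsAperiodicElem t)
    {t : T} {u : U} (hu : u ∈ ψ.rel t) (hua : IsAperiodicElem u) : IsAperiodicElem t := by
  obtain ⟨m, hm, htm⟩ := exists_pos_isIdempotentElem_pow t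
  obtain ⟨n, hn⟩ := isAperiodicElem_iff.1 hua
  have hnk : n ≤ m * n := Nat.le_mul_of_pos_left n hm
  have huk : u ^ (m * n) = u ^ n := pow_eq_of_pow_eq_pow_succ hn hnk
  have hidem : u ^ (m * n) * u ^ (m * n) = u ^ (m * n) := by
    rw [← pow_add, huk, pow_eq_of_pow_eq_pow_succ hn (by omega)]
  have hmem : u ^ (m * n) ∈ ψ.rel (t ^ (m * n + 1)) := by
    rw [huk, ← pow_eq_of_pow_eq_pow_succ hn (j := m * n + 1) (by omega)]
    exact ψ.pow_mem hu _
  refine isAperiodicElem_of_isIdempotentElem_pow ?_ (hψ _ hidem _ hmem)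
  rw [pow_mul]
  exact htm.pow n

theorem inMalcevAperiodic_of_mem (V : ∀ (T : Type) [Monoid T] [Fintype T], Prop)
    {T : Type} [Monoid T] [Fintype T] (hT : V T) : InMalcevAperiodic V T := by
  refine ⟨T, inferInstance, inferInstance, hT, RelMorph.id T, ?_⟩
  rintro e he t rfl
  exact IsIdempotentElem.isAperiodicElem he

theorem IsVAperiodic.of_le {V W : ∀ (T : Type) [Monoid T] [Fintype T], Prop}
    (hVW : ∀ (T : Type) [Monoid T] [Fintype T], V T → W T)
    {S : Type} [Monoid S] [Fintype S] {s : S} (hs : IsVAperiodic W S s) : IsVAperiodic V S s :=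
  fun T _ _ hT φ => hs T _ _ (hVW T hT) φ

theorem IsVAperiodic.malcevAperiodic {V : ∀ (T : Type) [Monoid T] [Fintype T], Prop}
    {S : Type} [Monoid S] [Fintype S] {s : S} (hs : IsVAperiodic V S s) :
    IsVAperiodic (fun T _ _ => InMalcevAperiodic V T) S s := by
  rintro T _ _ ⟨U, _, _, hU, ψ, hψ⟩ φ
  obtain ⟨u, ⟨t, ht, hu⟩, hua⟩ := hs U _ _ hU (φ.comp ψ)
  exact ⟨t, ht, ψ.isAperiodicElem_of_mem hψ hu hua⟩

theorem vAperiodic_iff_malcevAperiodic_general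
    (V : ∀ (T : Type) [Monoid T] [Fintype T], Prop)
    (S : Type) [Monoid S] [Fintype S] (s : S) :
    IsVAperiodic V S s ↔ IsVAperiodic (fun T _ _ => InMalcevAperiodic V T) S s :=
  ⟨IsVAperiodic.malcevAperiodic, IsVAperiodic.of_le fun _ _ _ => inMalcevAperiodic_of_mem V⟩

/-- Let `S` be a finite monoid, `s ∈ S`, and `V` a pseudovariety of finite
monoids (closed under finite direct products and division).  Then `s` is
`V`-aperiodic if and only if `s` is `(A ⓜ V)`-aperiodic. -/
theorem vAperiodic_iff_malcevAperiodic
    (V : ∀ (T : Type) [Monoid T] [Fintype T], Prop)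
    (hProd : ∀ (T₁ T₂ : Type) (_ : Monoid T₁) (_ : Fintype T₁)
      (_ : Monoid T₂) (_ : Fintype T₂), V T₁ → V T₂ → V (T₁ × T₂))
    (hDiv : ∀ (T N : Type) (_ : Monoid T) (_ : Fintype T) (_ : Monoid N)
      (_ : Fintype N), V T →
      (∃ (P : Submonoid T) (h : P →* N), Function.Surjective h) → V N)
    (S : Type) [Monoid S] [Fintype S] (s : S) :
    IsVAperiodic V S s ↔ IsVAperiodic (fun T _ _ => InMalcevAperiodic V T) S s :=
  vAperiodic_iff_malcevAperiodic_general V S s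
end
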